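/- Under the attributed Erdős–Rényi graph pair model G(n,p,s_u; m,q,s_a) with q = o(1), s_a = Θ(1), and a constant Δ_x > 0 satisfying Δ_x m q s_a² ≥ 3 log n, let S1 = {(i,j) : C_ij > x} with x = Δ_x m q s_a² / log(1/q). Then with probability tending to 1 as n → ∞, every pair (i,j) ∈ S1 satisfies j = Π*(i); in particular, with probability tending to 1 no two distinct pairs in S1 share a coordinate. -/

import Mathlib

open MeasureTheory ProbabilityTheory Filter Finset

noncomputable section

namespace AttrAlign

/-- The Bernoulli measure on `Bool` with success probability `r` (clamped to `[0,1]`). -/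
def bern (r : ℝ) : Measure Bool :=
  (PMF.bernoulli (min (Real.toNNReal r) 1) (min_le_right _ _)).toMeasure

/-- The uniform measure on a finite type (the zero measure if the type is empty). -/
def uniformMeasure (α : Type*) [Fintype α] [MeasurableSpace α] : Measure α := by
  classical
  exact if h : Nonempty α then (@PMF.uniformOfFintype α _ h).toMeasure else 0

instance permMeasurableSpace (n : ℕ) : MeasurableSpace (Equiv.Perm (Fin n)) := ⊤

/-- Sample space for the attributed Erdős–Rényi graph pair model `G(n,p,s_u; m,q,s_a)`:
base user–user edge indicators, base user–attribute edge indicators, the two subsampling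
indicator families for `G₁`, the two subsampling indicator families for `G₂`, and the
anonymizing permutation `Π*`.  Only the entries with `i < j` of the user–user indicator
matrices are used. -/
abbrev Config (n m : ℕ) :=
  (Fin n → Fin n → Bool) × (Fin n → Fin m → Bool) ×
    (Fin n → Fin n → Bool) × (Fin n → Fin m → Bool) ×
    (Fin n → Fin n → Bool) × (Fin n → Fin m → Bool) × Equiv.Perm (Fin n)

/-- i.i.d. `Bern(r)` measure on a `k × l` matrix of Booleans. -/
def edgeMeasure (k l : ℕ) (r : ℝ) : Measure (Fin k → Fin l → Bool) :=
  Measure.pi fun _ => Measure.pi fun _ => bern r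

/-- The law of the attributed Erdős–Rényi graph pair model `G(n,p,s_u; m,q,s_a)`:
all edge indicators are independent, base user–user edges are `Bern(p)`, base
user–attribute edges are `Bern(q)`, the user–user subsampling indicators are `Bern(s_u)`,
the user–attribute subsampling indicators are `Bern(s_a)`, and the permutation `Π*` is
uniform. -/
def attrMeasure (n m : ℕ) (p q su sa : ℝ) : Measure (Config n m) :=
  (edgeMeasure n n p).prod ((edgeMeasure n m q).prod ((edgeMeasure n n su).prod
    ((edgeMeasure n m sa).prod ((edgeMeasure n n su).prod
      ((edgeMeasure n m sa).prod (uniformMeasure (Equiv.Perm (Fin n))))))))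

variable {n m : ℕ}

def uu0 (ω : Config n m) : Fin n → Fin n → Bool := ω.1
def ua0 (ω : Config n m) : Fin n → Fin m → Bool := ω.2.1
def suG1 (ω : Config n m) : Fin n → Fin n → Bool := ω.2.2.1
def saG1 (ω : Config n m) : Fin n → Fin m → Bool := ω.2.2.2.1
def suG2 (ω : Config n m) : Fin n → Fin n → Bool := ω.2.2.2.2.1
def saG2 (ω : Config n m) : Fin n → Fin m → Bool := ω.2.2.2.2.2.1
/-- The true permutation `Π*`. -/
def pstar (ω : Config n m) : Equiv.Perm (Fin n) := ω.2.2.2.2.2.2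

/-- Symmetrized edge indicator on unordered pairs of users (no self loops). -/
def symEdge {k : ℕ} (f : Fin k → Fin k → Bool) (i j : Fin k) : Bool :=
  if i < j then f i j else if j < i then f j i else false

/-- Adjacency of users `i` and `j` in `G₁`. -/
def G1uu (ω : Config n m) (i j : Fin n) : Bool :=
  symEdge (fun a b => uu0 ω a b && suG1 ω a b) i j

/-- Adjacency of users `i` and `j` in `G₂`. -/
def G2uu (ω : Config n m) (i j : Fin n) : Bool :=
  symEdge (fun a b => uu0 ω a b && suG2 ω a b) i j

/-- Adjacency of users `i` and `j` in the anonymized graph `G₂'`, obtained by applying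
`Π*` to the users of `G₂`. -/
def G2puu (ω : Config n m) (i j : Fin n) : Bool :=
  G2uu ω ((pstar ω).symm i) ((pstar ω).symm j)

/-- Adjacency of user `i` and attribute `a` in `G₁`. -/
def G1ua (ω : Config n m) (i : Fin n) (a : Fin m) : Bool := ua0 ω i a && saG1 ω i a

/-- Adjacency of user `i` and attribute `a` in `G₂`. -/
def G2ua (ω : Config n m) (i : Fin n) (a : Fin m) : Bool := ua0 ω i a && saG2 ω i a

/-- Adjacency of user `j` and attribute `a` in the anonymized graph `G₂'`. -/
def G2pua (ω : Config n m) (j : Fin n) (a : Fin m) : Bool :=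
  G2ua ω ((pstar ω).symm j) a

/-- `C i j`: the number of attributes adjacent to user `i` in `G₁` and to user `j` in `G₂'`. -/
def CC (ω : Config n m) (i j : Fin n) : ℕ :=
  (univ.filter fun a : Fin m => G1ua ω i a = true ∧ G2pua ω j a = true).card

/-- The anchor set `{(i,j) : C_ij > x}`. -/
def anchors (x : ℝ) (ω : Config n m) : Finset (Fin n × Fin n) := by
  classical exact univ.filter fun ij : Fin n × Fin n => x < (CC ω ij.1 ij.2 : ℝ)

/-- No two distinct pairs of `S` share a coordinate. -/
def noConflict {k : ℕ} (S : Finset (Fin k × Fin k)) : Prop :=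
  ∀ a ∈ S, ∀ b ∈ S, (a.1 = b.1 ∨ a.2 = b.2) → a = b

/-- Users of `G₁` not matched by the anchor set `S`. -/
def unmatched1 (S : Finset (Fin n × Fin n)) : Finset (Fin n) := by
  classical exact univ.filter fun i : Fin n => ∀ j, (i, j) ∉ S

/-- Users of `G₂'` not matched by the anchor set `S`. -/
def unmatched2 (S : Finset (Fin n × Fin n)) : Finset (Fin n) := by
  classical exact univ.filter fun j : Fin n => ∀ i, (i, j) ∉ S

/-- `W i j`: the number of pairs `(k,l) ∈ S` with `k` adjacent to `i` in `G₁` and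
`l` adjacent to `j` in `G₂'`. -/
def W (ω : Config n m) (S : Finset (Fin n × Fin n)) (i j : Fin n) : ℕ := by
  classical
  exact (S.filter fun kl : Fin n × Fin n =>
    G1uu ω i kl.1 = true ∧ G2puu ω j kl.2 = true).card

end AttrAlign

/-!
A wrong pair `(i, j)`, `j ≠ Π*(i)`, involves two distinct users of the base graph, so an attribute
counts towards `C_ij` only if four independent indicators fire, which has probability `q² s_a²`.
A union bound over the `n²` wrong pairs and the `binom(m, k)` sets of `k = ⌊x⌋ + 1 > x` attributes
gives `P(some wrong C_ij > x) ≤ n² binom(m, k) (q² s_a²)^k ≤ n² (e m q² s_a² / k)^k`, and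
`e m q² s_a² / k ≤ e m q² s_a² / x = q · e log(1/q) / Δ_x ≤ q^{5/6}` once `log(1/q)` is large.
Hence the bound is at most `n² exp(-(5/6) k log(1/q)) ≤ n² exp(-(5/6) Δ_x m q s_a²) ≤ n^{-1/2}`.
Anchor sets made of pairs `(i, Π*(i))` have no conflicts because `Π*` is injective.
-/

open scoped ENNReal
open Real Topology

namespace AttrAlign

variable {n m : ℕ}

instance (r : ℝ) : IsProbabilityMeasure (bern r) := PMF.toMeasure.isProbabilityMeasure _

instance (k l : ℕ) (r : ℝ) : IsProbabilityMeasure (edgeMeasure k l r) := by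
  unfold edgeMeasure; infer_instance

instance (n : ℕ) : IsProbabilityMeasure (uniformMeasure (Equiv.Perm (Fin n))) := by
  rw [uniformMeasure, dif_pos ⟨1⟩]
  exact PMF.toMeasure.isProbabilityMeasure _

instance (n m : ℕ) (p q su sa : ℝ) : IsProbabilityMeasure (attrMeasure n m p q su sa) := by
  unfold attrMeasure; infer_instance

lemma bern_true {r : ℝ} (hr : r ≤ 1) : bern r {true} = ENNReal.ofReal r := by
  have hr' : Real.toNNReal r ≤ 1 := by simpa using Real.toNNReal_mono hr
  rw [bern, PMF.toMeasure_apply_singleton _ _ (measurableSet_singleton _), PMF.bernoulli_apply]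
  simp [min_eq_left hr', ENNReal.ofReal]

lemma edgeMeasure_rows_true {k l : ℕ} {r : ℝ} (hr : r ≤ 1) (R : Finset (Fin k))
    (T : Finset (Fin l)) :
    edgeMeasure k l r {f | ∀ i ∈ R, ∀ a ∈ T, f i a = true} = ENNReal.ofReal r ^ (#R * #T) := by
  have hpi : {f : Fin k → Fin l → Bool | ∀ i ∈ R, ∀ a ∈ T, f i a = true}
      = (R : Set (Fin k)).pi fun _ => (T : Set (Fin l)).pi fun _ => {true} := by
    ext; simp
  simp_rw [edgeMeasure, hpi, Measure.pi_pi_finset, bern_true hr, prod_const, ← pow_mul,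
    mul_comm]

lemma attrMeasure_forall_mem_shared_eq {p q su sa : ℝ} (hq : q ≤ 1) (hsa : sa ≤ 1)
    {i j : Fin n} (hij : i ≠ j) (T : Finset (Fin m)) :
    attrMeasure n m p q su sa {ω | ∀ a ∈ T, G1ua ω i a = true ∧ G2ua ω j a = true}
      = (ENNReal.ofReal q ^ 2 * ENNReal.ofReal sa ^ 2) ^ #T := by
  have hprod : {ω : Config n m | ∀ a ∈ T, G1ua ω i a = true ∧ G2ua ω j a = true}
      = Set.univ ×ˢ {f | ∀ i' ∈ ({i, j} : Finset _), ∀ a ∈ T, f i' a = true} ×ˢ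
          Set.univ ×ˢ {f | ∀ i' ∈ ({i} : Finset _), ∀ a ∈ T, f i' a = true} ×ˢ
          Set.univ ×ˢ {f | ∀ i' ∈ ({j} : Finset _), ∀ a ∈ T, f i' a = true} ×ˢ Set.univ := by
    ext ω
    simp only [G1ua, G2ua, ua0, saG1, saG2, Bool.and_eq_true, Set.mem_ofPred_eq, Set.mem_prod,
      Set.mem_univ, true_and, and_true, mem_insert, mem_singleton, forall_eq_or_imp, forall_eq,
      imp_and, forall_and]
    tauto
  rw [attrMeasure, hprod]
  simp only [Measure.prod_prod, measure_univ, one_mul, mul_one, edgeMeasure_rows_true hq,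
    edgeMeasure_rows_true hsa, card_pair hij, card_singleton]
  ring

lemma measure_setOf_le_card_filter_le {Ω α : Type*} [MeasurableSpace Ω] [Fintype α] (μ : Measure Ω)
    (P : Ω → α → Prop) [∀ ω, DecidablePred (P ω)] (k : ℕ) {b : ℝ≥0∞}
    (hb : ∀ T : Finset α, #T = k → μ {ω | ∀ a ∈ T, P ω a} ≤ b) :
    μ {ω | k ≤ #{a | P ω a}} ≤ (Fintype.card α).choose k * b := by
  have hcover : {ω | k ≤ #{a | P ω a}} ⊆ ⋃ T ∈ powersetCard k univ, {ω | ∀ a ∈ T, P ω a} := by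
    intro ω hω
    obtain ⟨T, hT, hTk⟩ := exists_subset_card_eq hω
    simp only [Set.mem_iUnion]
    exact ⟨T, mem_powersetCard_univ.mpr hTk, fun a ha => (mem_filter.mp (hT ha)).2⟩
  calc μ {ω | k ≤ #{a | P ω a}}
      ≤ ∑ T ∈ powersetCard k univ, μ {ω | ∀ a ∈ T, P ω a} :=
        (measure_mono hcover).trans (measure_biUnion_finset_le _ _)
    _ ≤ ∑ _T ∈ powersetCard k (univ : Finset α), b :=
        sum_le_sum fun T hT => hb T (mem_powersetCard_univ.mp hT)
    _ = (Fintype.card α).choose k * b := by simp [card_powersetCard]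

lemma attrMeasure_exists_ne_le_card_shared_le {p q su sa : ℝ} (hq : q ≤ 1) (hsa : sa ≤ 1) (k : ℕ) :
    attrMeasure n m p q su sa
        {ω | ∃ i j : Fin n, i ≠ j ∧ k ≤ #{a | G1ua ω i a = true ∧ G2ua ω j a = true}}
      ≤ n ^ 2 * (m.choose k * (ENNReal.ofReal q ^ 2 * ENNReal.ofReal sa ^ 2) ^ k) := by
  set μ := attrMeasure n m p q su sa
  have hpair : ∀ ij ∈ (univ : Finset (Fin n)).offDiag,
      μ {ω | k ≤ #{a | G1ua ω ij.1 a = true ∧ G2ua ω ij.2 a = true}}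
        ≤ m.choose k * (ENNReal.ofReal q ^ 2 * ENNReal.ofReal sa ^ 2) ^ k := fun ij hij => by
    simpa using measure_setOf_le_card_filter_le μ _ k fun T hT =>
      (attrMeasure_forall_mem_shared_eq hq hsa (mem_offDiag.mp hij).2.2 T).trans_le (by rw [hT])
  have hcard : ((univ : Finset (Fin n)).offDiag.card : ℝ≥0∞) ≤ n ^ 2 := by
    exact_mod_cast (card_le_univ _).trans_eq (by simp [sq])
  calc μ {ω | ∃ i j : Fin n, i ≠ j ∧ k ≤ #{a | G1ua ω i a = true ∧ G2ua ω j a = true}}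
      ≤ μ (⋃ ij ∈ (univ : Finset (Fin n)).offDiag,
          {ω | k ≤ #{a | G1ua ω ij.1 a = true ∧ G2ua ω ij.2 a = true}}) :=
        measure_mono fun ω ⟨i, j, hij, hk⟩ => Set.mem_biUnion (x := (i, j)) (by simpa using hij) hk
    _ ≤ _ := (measure_biUnion_finset_le _ _).trans (sum_le_card_nsmul _ _ _ hpair)
    _ ≤ _ := by rw [nsmul_eq_mul]; gcongr

lemma compl_setOf_allCorrect_subset {x : ℝ} (hx : 0 ≤ x) :
    {ω : Config n m | ∀ i j, x < (CC ω i j : ℝ) → j = pstar ω i}ᶜ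
      ⊆ {ω | ∃ i j : Fin n, i ≠ j ∧
          ⌊x⌋₊ + 1 ≤ #{a | G1ua ω i a = true ∧ G2ua ω j a = true}} := by
  intro ω hω
  simp only [Set.mem_compl_iff, Set.mem_ofPred_eq, not_forall] at hω
  obtain ⟨i, j, hlt, hne⟩ := hω
  refine ⟨i, (pstar ω).symm j, fun h => hne (by rw [h, Equiv.apply_symm_apply]), ?_⟩
  exact (Nat.floor_lt hx).mpr hlt

lemma attrMeasure_compl_setOf_allCorrect_le {p q su sa x : ℝ} (hq0 : 0 ≤ q) (hq1 : q ≤ 1)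
    (hsa0 : 0 ≤ sa) (hsa1 : sa ≤ 1) (hx : 0 ≤ x) :
    attrMeasure n m p q su sa {ω | ∀ i j, x < (CC ω i j : ℝ) → j = pstar ω i}ᶜ
      ≤ ENNReal.ofReal (n ^ 2 * (m.choose (⌊x⌋₊ + 1) * (q ^ 2 * sa ^ 2) ^ (⌊x⌋₊ + 1))) := by
  refine (measure_mono (compl_setOf_allCorrect_subset hx)).trans
    ((attrMeasure_exists_ne_le_card_shared_le hq1 hsa1 _).trans_eq ?_)
  rw [ENNReal.ofReal_mul (by positivity), ENNReal.ofReal_mul (by positivity),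
    ENNReal.ofReal_pow n.cast_nonneg, ENNReal.ofReal_pow (by positivity),
    ENNReal.ofReal_mul (by positivity), ENNReal.ofReal_pow hq0, ENNReal.ofReal_pow hsa0,
    ENNReal.ofReal_natCast, ENNReal.ofReal_natCast]

lemma noConflict_of_forall_mem_eq_apply {k : ℕ} {S : Finset (Fin k × Fin k)}
    (σ : Equiv.Perm (Fin k)) (h : ∀ ij ∈ S, ij.2 = σ ij.1) : noConflict S := by
  rintro ⟨i, j⟩ hij ⟨i', j'⟩ hij' hshare
  have hj := h _ hij
  have hj' := h _ hij'
  simp only at hj hj' hshare ⊢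
  rcases hshare with rfl | rfl
  · rw [hj, hj']
  · rw [σ.injective (hj.symm.trans hj')]

lemma choose_mul_pow_le (m k : ℕ) {y : ℝ} (hy : 0 ≤ y) :
    (m.choose k : ℝ) * y ^ k ≤ (exp 1 * m * y / k) ^ k := by
  have hkk : 0 < (k : ℝ) ^ k := by
    rcases k with _ | k
    · simp
    · positivity
  have hfact : (1 : ℝ) / k.factorial ≤ exp k / (k : ℝ) ^ k := by
    rw [div_le_div_iff₀ (by positivity) hkk, one_mul, ← div_le_iff₀ (by positivity)]
    exact pow_div_factorial_le_exp _ k.cast_nonneg k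
  calc (m.choose k : ℝ) * y ^ k ≤ (m : ℝ) ^ k / k.factorial * y ^ k := by
        gcongr; exact Nat.choose_le_pow_div k m
    _ = (m * y) ^ k * (1 / k.factorial) := by ring
    _ ≤ (m * y) ^ k * (exp k / (k : ℝ) ^ k) := by gcongr
    _ = (exp 1 * m * y / k) ^ k := by rw [← exp_one_pow]; ring

lemma sq_mul_choose_mul_pow_le {n m k : ℕ} {q s Δ : ℝ} (hq0 : 0 < q) (hq1 : q < 1) (hΔ : 0 < Δ)
    (hn : 1 < n) (hlog : 3 * log n ≤ Δ * (m * q * s ^ 2))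
    (hk : Δ * (m * q * s ^ 2) / log (1 / q) ≤ k)
    (hL : exp 1 / Δ * log (1 / q) ≤ exp (1 / 6 * log (1 / q))) :
    (n : ℝ) ^ 2 * (m.choose k * (q ^ 2 * s ^ 2) ^ k) ≤ exp (-(log n / 2)) := by
  set L := log (1 / q) with hLdef
  have hL0 : 0 < L := log_pos (one_lt_one_div hq0 hq1)
  have hlogn : 0 < log n := log_pos (by exact_mod_cast hn)
  have hμ : 0 < Δ * (m * q * s ^ 2) := by linarith
  have hx0 : 0 < Δ * (m * q * s ^ 2) / L := div_pos hμ hL0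
  have hms : (m : ℝ) * s ≠ 0 := fun h => hμ.ne' (by linear_combination Δ * q * s * h)
  have hq : q = exp (-L) := by rw [hLdef, one_div, log_inv, neg_neg, exp_log hq0]
  have hbase : exp 1 * m * (q ^ 2 * s ^ 2) / k ≤ exp (-(5 / 6) * L) :=
    calc exp 1 * m * (q ^ 2 * s ^ 2) / k
        ≤ exp 1 * m * (q ^ 2 * s ^ 2) / (Δ * (m * q * s ^ 2) / L) := by gcongr
      _ = q * (exp 1 / Δ * L) := by field_simp; exact div_self hms
      _ ≤ exp (-L) * exp (1 / 6 * L) := by rw [← hq]; gcongr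
      _ = exp (-(5 / 6) * L) := by rw [← exp_add]; ring_nf
  have hkL : Δ * (m * q * s ^ 2) ≤ k * L := (div_le_iff₀ hL0).mp hk
  calc (n : ℝ) ^ 2 * (m.choose k * (q ^ 2 * s ^ 2) ^ k)
      ≤ exp (log n) ^ 2 * exp (-(5 / 6) * L) ^ k := by
        rw [exp_log (by positivity)]
        gcongr
        exact (choose_mul_pow_le m k (by positivity)).trans
          (pow_le_pow_left₀ (by positivity) hbase k)
    _ = exp (2 * log n - 5 / 6 * (k * L)) := by
        rw [← exp_nat_mul, ← exp_nat_mul, ← exp_add]; ring_nf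
    _ ≤ exp (-(log n / 2)) := exp_le_exp.mpr (by linarith)

lemma eventually_mul_le_exp_mul (c : ℝ) {b : ℝ} (hb : 0 < b) :
    ∀ᶠ y in atTop, c * y ≤ exp (b * y) := by
  filter_upwards [((isLittleO_pow_exp_pos_mul_atTop 1 hb).const_mul_left c).bound one_pos]
    with y hy
  simpa [abs_of_pos (exp_pos _)] using (le_abs_self _).trans hy

lemma tendsto_log_one_div_atTop {q : ℕ → ℝ} (hq0 : ∀ n, 0 < q n) (hq : Tendsto q atTop (𝓝 0)) :
    Tendsto (fun n => log (1 / q n)) atTop atTop := by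
  simp only [one_div]
  exact tendsto_log_atTop.comp (tendsto_inv_nhdsGT_zero.comp
    (tendsto_nhdsWithin_iff.mpr ⟨hq, Eventually.of_forall hq0⟩))

lemma tendsto_exp_neg_half_log_natCast :
    Tendsto (fun n : ℕ => exp (-(log n / 2))) atTop (𝓝 0) :=
  tendsto_exp_atBot.comp <| tendsto_neg_atTop_atBot.comp <|
    (tendsto_log_atTop.comp tendsto_natCast_atTop_atTop).atTop_div_const two_pos

end AttrAlign

open AttrAlign

theorem anchors_attrRich_all_correct_general
    (p q su sa : ℕ → ℝ) (m : ℕ → ℕ) (Δx : ℝ)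
    (hq01 : ∀ n, 0 < q n ∧ q n < 1)
    (hsa01 : ∀ n, 0 < sa n ∧ sa n ≤ 1)
    (hq : Tendsto q atTop (nhds 0))
    (hΔx : 0 < Δx)
    (hΔx' : ∀ n : ℕ, 3 * Real.log n ≤ Δx * ((m n : ℝ) * q n * (sa n) ^ 2)) :
    Tendsto (fun n =>
        attrMeasure n (m n) (p n) (q n) (su n) (sa n)
          {ω : Config n (m n) | ∀ i j : Fin n,
            Δx * ((m n : ℝ) * q n * (sa n) ^ 2) / Real.log (1 / q n) < (CC ω i j : ℝ) →
              j = pstar ω i})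
      atTop (nhds 1) ∧
    Tendsto (fun n =>
        attrMeasure n (m n) (p n) (q n) (su n) (sa n)
          {ω : Config n (m n) |
            noConflict (anchors
              (Δx * ((m n : ℝ) * q n * (sa n) ^ 2) / Real.log (1 / q n)) ω)})
      atTop (nhds 1) := by
  set x : ℕ → ℝ := fun n => Δx * ((m n : ℝ) * q n * (sa n) ^ 2) / Real.log (1 / q n)
  have hx0 : ∀ n, 0 ≤ x n := fun n => div_nonneg (by have := (hq01 n).1; positivity)
    (log_nonneg (one_le_one_div (hq01 n).1 (hq01 n).2.le))
  have hbad : Tendsto (fun n => attrMeasure n (m n) (p n) (q n) (su n) (sa n)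
      {ω : Config n (m n) | ∀ i j, x n < (CC ω i j : ℝ) → j = pstar ω i}ᶜ) atTop (𝓝 0) := by
    have hL := (tendsto_log_one_div_atTop (fun n => (hq01 n).1) hq).eventually
      (eventually_mul_le_exp_mul (exp 1 / Δx) (by norm_num : (0 : ℝ) < 1 / 6))
    refine tendsto_of_tendsto_of_tendsto_of_le_of_le' tendsto_const_nhds
      (by simpa using ENNReal.tendsto_ofReal tendsto_exp_neg_half_log_natCast)
      (Eventually.of_forall fun _ => zero_le) ?_
    filter_upwards [hL, eventually_gt_atTop 1] with n hLn hn
    exact (attrMeasure_compl_setOf_allCorrect_le (hq01 n).1.le (hq01 n).2.le (hsa01 n).1.le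
      (hsa01 n).2 (hx0 n)).trans <| ENNReal.ofReal_le_ofReal <|
        sq_mul_choose_mul_pow_le (hq01 n).1 (hq01 n).2 hΔx hn (hΔx' n)
          (by push_cast; exact (Nat.lt_floor_add_one _).le) hLn
  have hgood := (ENNReal.Tendsto.sub tendsto_const_nhds hbad (Or.inl ENNReal.one_ne_top)).congr
    fun n => by rw [← prob_compl_eq_one_sub (Set.toFinite _).measurableSet, compl_compl]
  rw [tsub_zero] at hgood
  refine ⟨hgood, tendsto_of_tendsto_of_tendsto_of_le_of_le hgood tendsto_const_nhds
    (fun n => measure_mono fun ω hω => ?_) (fun n => prob_le_one)⟩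
  exact noConflict_of_forall_mem_eq_apply (pstar ω) fun ij hij =>
    hω ij.1 ij.2 (by simpa only [anchors, mem_filter, mem_univ, true_and] using hij)

/-- Under the attributed Erdős–Rényi graph pair model with `q = o(1)`, `s_a = Θ(1)`
and a constant `Δ_x > 0` satisfying `Δ_x m q s_a² ≥ 3 log n`, the anchor set
`S₁ = {(i,j) : C_ij > x}` with `x = Δ_x m q s_a² / log(1/q)` contains, with probability
tending to `1`, only correct pairs `(i, Π*(i))`; in particular, with probability tending
to `1` no two distinct pairs in `S₁` share a coordinate. -/
theorem anchors_attrRich_all_correct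
    (p q su sa : ℕ → ℝ) (m : ℕ → ℕ) (Δx : ℝ)
    (hp01 : ∀ n, 0 ≤ p n ∧ p n ≤ 1) (hq01 : ∀ n, 0 < q n ∧ q n < 1)
    (hsu01 : ∀ n, 0 ≤ su n ∧ su n ≤ 1) (hsa01 : ∀ n, 0 < sa n ∧ sa n ≤ 1)
    (hq : Tendsto q atTop (nhds 0))
    (hsa : ∃ c > 0, ∀ᶠ n : ℕ in atTop, c ≤ sa n)
    (hΔx : 0 < Δx)
    (hΔx' : ∀ n : ℕ, 3 * Real.log n ≤ Δx * ((m n : ℝ) * q n * (sa n) ^ 2)) :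
    Tendsto (fun n =>
        attrMeasure n (m n) (p n) (q n) (su n) (sa n)
          {ω : Config n (m n) | ∀ i j : Fin n,
            Δx * ((m n : ℝ) * q n * (sa n) ^ 2) / Real.log (1 / q n) < (CC ω i j : ℝ) →
              j = pstar ω i})
      atTop (nhds 1) ∧
    Tendsto (fun n =>
        attrMeasure n (m n) (p n) (q n) (su n) (sa n)
          {ω : Config n (m n) |
            noConflict (anchors
              (Δx * ((m n : ℝ) * q n * (sa n) ^ 2) / Real.log (1 / q n)) ω)})
      atTop (nhds 1) :=
  anchors_attrRich_all_correct_general p q su sa m Δx hq01 hsa01 hq hΔx hΔx'
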